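/- arXiv:1801.09264 — 2 statements merged into one kernel-verified Lean document; each statement's English description precedes it below -/
import Mathlib

section
/- For invertible d×d matrices F_{n+1} and F_n with F_{n+1} = F_n + Δt·G, if B_k = F_k F_kᵀ, then (1/2) B_{n+1}⁻¹ : (B_{n+1} − B_n) = Δt·tr(F_{n+1}⁻¹ G) − (Δt²/2)|F_{n+1}⁻¹ G|², where A:C = tr(ACᵀ) and |A|² = A:A. -/
open Matrix

theorem half_inv_frobenius_diff (d : ℕ) (Fn Fn1 G : Matrix (Fin d) (Fin d) ℝ)
    (Δt : ℝ) (hFn : IsUnit Fn.det) (hFn1 : IsUnit Fn1.det)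
    (h : Fn1 = Fn + Δt • G) :
    (1/2) * ((Fn1 * Fn1ᵀ)⁻¹ * (Fn1 * Fn1ᵀ - Fn * Fnᵀ)ᵀ).trace
      = Δt * (Fn1⁻¹ * G).trace
        - (Δt^2/2) * ((Fn1⁻¹ * G) * (Fn1⁻¹ * G)ᵀ).trace := by
  have hFn' : Fn = Fn1 - Δt • G := by rw [h]; abel
  have hmi : Fn1⁻¹ * Fn1 = 1 := Matrix.nonsing_inv_mul _ hFn1
  have him : Fn1 * Fn1⁻¹ = 1 := Matrix.mul_nonsing_inv _ hFn1
  have hrev : (Fn1 * Fn1ᵀ)⁻¹ = (Fn1⁻¹)ᵀ * Fn1⁻¹ := by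
    rw [Matrix.mul_inv_rev, Matrix.transpose_nonsing_inv]
  -- term 1
  have t1 : ((Fn1⁻¹)ᵀ * Fn1⁻¹ * (G * Fn1ᵀ)).trace = (Fn1⁻¹ * G).trace := by
    rw [Matrix.trace_mul_comm]
    calc (G * Fn1ᵀ * ((Fn1⁻¹)ᵀ * Fn1⁻¹)).trace
        = (G * (Fn1ᵀ * (Fn1⁻¹)ᵀ) * Fn1⁻¹).trace := by simp [mul_assoc]
      _ = (Fn1⁻¹ * G).trace := by
          rw [← Matrix.transpose_mul, hmi, Matrix.transpose_one, Matrix.mul_one,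
            Matrix.trace_mul_comm]
  -- term 2
  have t2 : ((Fn1⁻¹)ᵀ * Fn1⁻¹ * (Fn1 * Gᵀ)).trace = (Fn1⁻¹ * G).trace := by
    calc ((Fn1⁻¹)ᵀ * Fn1⁻¹ * (Fn1 * Gᵀ)).trace
        = ((Fn1⁻¹)ᵀ * (Fn1⁻¹ * Fn1) * Gᵀ).trace := by simp [mul_assoc]
      _ = (Fn1⁻¹ * G).trace := by
          rw [hmi, Matrix.mul_one, ← Matrix.transpose_mul, Matrix.trace_transpose,
            Matrix.trace_mul_comm]
  -- term 3
  have t3 : ((Fn1⁻¹)ᵀ * Fn1⁻¹ * (G * Gᵀ)).trace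
      = ((Fn1⁻¹ * G) * (Fn1⁻¹ * G)ᵀ).trace := by
    rw [show (Fn1⁻¹)ᵀ * Fn1⁻¹ * (G * Gᵀ) = (Fn1⁻¹)ᵀ * (Fn1⁻¹ * (G * Gᵀ)) by
      simp [mul_assoc], Matrix.trace_mul_comm]
    congr 1
    simp [Matrix.transpose_mul, mul_assoc]
  have expand : Fn1 * Fn1ᵀ - Fn * Fnᵀ
      = Δt • (G * Fn1ᵀ) + Δt • (Fn1 * Gᵀ) - (Δt^2) • (G * Gᵀ) := by
    rw [hFn']
    simp [Matrix.sub_mul, Matrix.mul_sub, Matrix.transpose_sub, Matrix.transpose_smul,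
      Matrix.smul_mul, Matrix.mul_smul, smul_smul]
    module
  have hsymm : (Fn1 * Fn1ᵀ - Fn * Fnᵀ)ᵀ = Fn1 * Fn1ᵀ - Fn * Fnᵀ := by
    simp [Matrix.transpose_sub, Matrix.transpose_mul]
  rw [hsymm, hrev, expand]
  simp only [Matrix.mul_add, Matrix.mul_sub, Matrix.mul_smul, Matrix.trace_add,
    Matrix.trace_sub, Matrix.trace_smul, t1, t2, t3, smul_eq_mul]
  ring
end

section
/- Let F_n, F_{n+1} be invertible d×d matrices with positive determinant satisfying F_{n+1} = F_n + Δt·G. Then ln(det F_{n+1}) − ln(det F_n) ≥ Δt·tr(F_{n+1}⁻¹G) − (Δt²/2)|F_{n+1}⁻¹G|², where |A|² = tr(AAᵀ). -/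
/-!
Writing `X = F_{n+1}⁻¹ G`, the update gives `F_n = F_{n+1} (1 - Δt X)`, so the claim is an
upper bound on `ln det (1 - A)` for `A = Δt X`. For invertible `M`, `M Mᵀ` is positive
definite, and `ln λ ≤ λ - 1` on its eigenvalues gives `2 ln det M ≤ tr (M Mᵀ) - d`; expanding
`tr ((1 - A)(1 - A)ᵀ) = d - 2 tr A + tr (A Aᵀ)` yields
`ln det (1 - A) ≤ -tr A + tr (A Aᵀ) / 2`.
-/

open Matrix

namespace Matrix

variable {n : Type*} [Fintype n] [DecidableEq n]

lemma PosDef.log_det_le_trace_sub_card {B : Matrix n n ℝ} (hB : B.PosDef) :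
    Real.log B.det ≤ B.trace - Fintype.card n := by
  have hpos := hB.eigenvalues_pos
  rw [hB.isHermitian.det_eq_prod_eigenvalues, hB.isHermitian.trace_eq_sum_eigenvalues]
  simp only [RCLike.ofReal_real_eq_id, id]
  rw [Real.log_prod fun i _ => (hpos i).ne']
  calc ∑ i, Real.log (hB.1.eigenvalues i) ≤ ∑ i, (hB.1.eigenvalues i - 1) :=
        Finset.sum_le_sum fun i _ => Real.log_le_sub_one_of_pos (hpos i)
    _ = _ := by simp [Finset.sum_sub_distrib]

lemma two_mul_log_det_le_trace_mul_transpose_sub_card {M : Matrix n n ℝ} (hM : M.det ≠ 0) :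
    2 * Real.log M.det ≤ (M * Mᵀ).trace - Fintype.card n := by
  have hdet : (M * Mᵀ).det = M.det ^ 2 := by rw [det_mul, det_transpose, sq]
  have hPD : (M * Mᵀ).PosDef := by
    have hPSD : (M * Mᵀ).PosSemidef := by
      simpa using posSemidef_self_mul_conjTranspose M
    exact hPSD.posDef_iff_det_ne_zero.2 (hdet ▸ pow_ne_zero 2 hM)
  simpa [hdet, Real.log_pow] using hPD.log_det_le_trace_sub_card

lemma trace_one_sub_mul_transpose (A : Matrix n n ℝ) :
    ((1 - A) * (1 - A)ᵀ).trace = Fintype.card n - 2 * A.trace + (A * Aᵀ).trace := by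
  simp only [sub_mul, mul_sub, transpose_sub, transpose_one, one_mul, mul_one, trace_sub,
    trace_one, trace_transpose]
  ring

lemma log_det_one_sub_le {A : Matrix n n ℝ} (hA : (1 - A).det ≠ 0) :
    Real.log (1 - A).det ≤ -A.trace + (A * Aᵀ).trace / 2 := by
  have := two_mul_log_det_le_trace_mul_transpose_sub_card hA
  rw [trace_one_sub_mul_transpose] at this
  linarith

end Matrix

theorem logDet_update_bound (d : ℕ) (Fn Fn1 G : Matrix (Fin d) (Fin d) ℝ)
    (Δt : ℝ) (hFn : 0 < Fn.det) (hFn1 : 0 < Fn1.det)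
    (h : Fn1 = Fn + Δt • G) :
    Real.log Fn1.det - Real.log Fn.det
      ≥ Δt * (Fn1⁻¹ * G).trace
        - (Δt^2/2) * ((Fn1⁻¹ * G) * (Fn1⁻¹ * G)ᵀ).trace := by
  set X := Fn1⁻¹ * G
  have hFn_eq : Fn = Fn1 * (1 - Δt • X) := by
    rw [mul_sub, mul_one, Matrix.mul_smul, ← mul_assoc,
      mul_nonsing_inv _ (isUnit_iff_ne_zero.2 hFn1.ne'), one_mul, h, add_sub_cancel_right]
  have hdet : Fn.det = Fn1.det * (1 - Δt • X).det := by rw [hFn_eq, det_mul]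
  have hstep : (1 - Δt • X).det ≠ 0 := right_ne_zero_of_mul (hdet ▸ hFn.ne')
  have hlog : Real.log Fn.det = Real.log Fn1.det + Real.log (1 - Δt • X).det := by
    rw [hdet, Real.log_mul hFn1.ne' hstep]
  have hbound := log_det_one_sub_le hstep
  rw [transpose_smul, smul_mul_smul_comm, trace_smul, trace_smul, smul_eq_mul, smul_eq_mul]
    at hbound
  linarith
end
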